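/- For any function f : S → ℝ, policy π, and transition kernels P_s, P_t: (1−γ)(J^π_{P_t} − J^π_{P_s}) ≥ L_f − 2 ε_f · D_TV(d^π_{P_s}, d^π_{P_t}), where L_f = E_{s∼d^π_{P_s}, a∼π(·|s)}[ E_{s'∼P_t(·|s,a)} δ_f(s,a,s') − E_{s'∼P_s(·|s,a)} δ_f(s,a,s') ], δ_f(s,a,s') = r(s,a,s') + γ f(s') − f(s), and ε_f = max_s |E_{a∼π(·|s), s'∼P_t(·|s,a)} δ_f(s,a,s')|. -/
import Mathlib


open scoped BigOperators

section MDP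

variable {S A : Type*} [Fintype S] [Fintype A] [DecidableEq S]

/-- One-step state distribution update under kernel `P` and policy `π`. -/
noncomputable def stepDist (P : S → A → S → ℝ) (π : S → A → ℝ) (ρ : S → ℝ) : S → ℝ :=
  fun s => ∑ s' : S, ∑ a : A, ρ s' * π s' a * P s' a s

/-- Distribution of the state at time `t`. -/
noncomputable def stateDist (P : S → A → S → ℝ) (π : S → A → ℝ) (ρ₀ : S → ℝ) : ℕ → S → ℝ
  | 0 => ρ₀
  | t + 1 => stepDist P π (stateDist P π ρ₀ t)

/-- Discounted state visitation distribution `d^π_P`. -/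
noncomputable def visitS (γ : ℝ) (P : S → A → S → ℝ) (π : S → A → ℝ) (ρ₀ : S → ℝ) : S → ℝ :=
  fun s => (1 - γ) * ∑' t : ℕ, γ ^ t * stateDist P π ρ₀ t s

/-- Discounted state-action visitation distribution `μ^π_P`. -/
noncomputable def visitSA (γ : ℝ) (P : S → A → S → ℝ) (π : S → A → ℝ) (ρ₀ : S → ℝ) :
    S × A → ℝ :=
  fun x => (1 - γ) * ∑' t : ℕ, γ ^ t * stateDist P π ρ₀ t x.1 * π x.1 x.2

/-- Discounted transition (state-action-next-state) visitation distribution `ν^π_P`. -/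
noncomputable def visitT (γ : ℝ) (P : S → A → S → ℝ) (π : S → A → ℝ) (ρ₀ : S → ℝ) :
    S × A × S → ℝ :=
  fun x => (1 - γ) * ∑' t : ℕ, γ ^ t * stateDist P π ρ₀ t x.1 * π x.1 x.2.1 * P x.1 x.2.1 x.2.2

/-- Expected discounted return starting from initial distribution `ρ₀`. -/
noncomputable def ret (γ : ℝ) (r : S → A → S → ℝ) (P : S → A → S → ℝ) (π : S → A → ℝ)
    (ρ₀ : S → ℝ) : ℝ :=
  ∑' t : ℕ, γ ^ t *
    ∑ s : S, ∑ a : A, ∑ s' : S, stateDist P π ρ₀ t s * π s a * P s a s' * r s a s'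

/-- Value function `V^π_P`. -/
noncomputable def valueFn (γ : ℝ) (r : S → A → S → ℝ) (P : S → A → S → ℝ) (π : S → A → ℝ) :
    S → ℝ :=
  fun s => ret γ r P π (fun s'' => if s'' = s then 1 else 0)

/-- Expected discounted return `J^π_P = E_{ρ₀}[V^π_P]`. -/
noncomputable def expRet (γ : ℝ) (r : S → A → S → ℝ) (P : S → A → S → ℝ) (π : S → A → ℝ)
    (ρ₀ : S → ℝ) : ℝ :=
  ∑ s : S, ρ₀ s * valueFn γ r P π s

/-- Total variation distance `(1/2) ∑ |p - q|`. -/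
noncomputable def tvDist {X : Type*} [Fintype X] (p q : X → ℝ) : ℝ :=
  (1 / 2) * ∑ x : X, |p x - q x|

/-- Kullback–Leibler divergence on a finite set. -/
noncomputable def klDiv' {X : Type*} [Fintype X] (p q : X → ℝ) : ℝ :=
  ∑ x : X, p x * Real.log (p x / q x)

/-- Jensen–Shannon divergence on a finite set. -/
noncomputable def jsDiv {X : Type*} [Fintype X] (p q : X → ℝ) : ℝ :=
  (1 / 2) * klDiv' p (fun x => (p x + q x) / 2) +
    (1 / 2) * klDiv' q (fun x => (p x + q x) / 2)

/-- `π` is a stochastic policy. -/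
def IsStochPol (π : S → A → ℝ) : Prop :=
  ∀ s, (∀ a, 0 ≤ π s a) ∧ ∑ a : A, π s a = 1

/-- `P` is a stochastic transition kernel. -/
def IsStochKer (P : S → A → S → ℝ) : Prop :=
  ∀ s a, (∀ s', 0 ≤ P s a s') ∧ ∑ s' : S, P s a s' = 1

/-- `p` is a probability mass function. -/
def IsProb {X : Type*} [Fintype X] (p : X → ℝ) : Prop :=
  (∀ x, 0 ≤ p x) ∧ ∑ x : X, p x = 1

end MDP
set_option linter.unusedSectionVars false
section Aux

variable {S A : Type*} [Fintype S] [Fintype A] [DecidableEq S]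

lemma prob_le_one {X : Type*} [Fintype X] {p : X → ℝ} (hp : IsProb p) (x : X) : p x ≤ 1 := by
  calc p x ≤ ∑ y : X, p y := Finset.single_le_sum (fun y _ => hp.1 y) (Finset.mem_univ x)
  _ = 1 := hp.2

lemma stepDist_prob {P : S → A → S → ℝ} {π : S → A → ℝ} {ρ : S → ℝ}
    (hπ : IsStochPol π) (hP : IsStochKer P) (hρ : IsProb ρ) : IsProb (stepDist P π ρ) := by
  constructor
  · intro s
    apply Finset.sum_nonneg; intro s' _; apply Finset.sum_nonneg; intro a _
    exact mul_nonneg (mul_nonneg (hρ.1 s') ((hπ s').1 a)) ((hP s' a).1 s)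
  · unfold stepDist
    rw [Finset.sum_comm]
    have : ∀ s' : S, ∑ s : S, ∑ a : A, ρ s' * π s' a * P s' a s = ρ s' := by
      intro s'
      rw [Finset.sum_comm]
      calc ∑ a : A, ∑ s : S, ρ s' * π s' a * P s' a s
          = ∑ a : A, ρ s' * π s' a * ∑ s : S, P s' a s := by
            refine Finset.sum_congr rfl fun a _ => ?_; rw [Finset.mul_sum]
        _ = ∑ a : A, ρ s' * π s' a := by
            refine Finset.sum_congr rfl fun a _ => ?_; rw [(hP s' a).2, mul_one]
        _ = ρ s' * ∑ a : A, π s' a := by rw [Finset.mul_sum]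
        _ = ρ s' := by rw [(hπ s').2, mul_one]
    rw [Finset.sum_congr rfl fun s' _ => this s', hρ.2]

lemma stateDist_prob {P : S → A → S → ℝ} {π : S → A → ℝ} {ρ₀ : S → ℝ}
    (hπ : IsStochPol π) (hP : IsStochKer P) (hρ : IsProb ρ₀) (t : ℕ) :
    IsProb (stateDist P π ρ₀ t) := by
  induction t with
  | zero => exact hρ
  | succ n ih => exact stepDist_prob hπ hP ih

lemma weighted_abs_le {X : Type*} [Fintype X] {p : X → ℝ} (hp : IsProb p) (c : X → ℝ) :
    |∑ x : X, p x * c x| ≤ ∑ x : X, |c x| := by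
  calc |∑ x : X, p x * c x| ≤ ∑ x : X, |p x * c x| := Finset.abs_sum_le_sum_abs _ _
  _ ≤ ∑ x : X, |c x| := by
      refine Finset.sum_le_sum fun x _ => ?_
      rw [abs_mul, abs_of_nonneg (hp.1 x)]
      exact mul_le_of_le_one_left (abs_nonneg _) (prob_le_one hp x)

lemma summable_geo_mul {γ : ℝ} (h0 : 0 ≤ γ) (h1 : γ < 1) {c : ℕ → ℝ} {B : ℝ}
    (hb : ∀ t, |c t| ≤ B) : Summable (fun t => γ ^ t * c t) := by
  apply Summable.of_norm
  refine Summable.of_nonneg_of_le (fun t => norm_nonneg _) (fun t => ?_)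
    ((summable_geometric_of_lt_one h0 h1).mul_right B)
  rw [Real.norm_eq_abs, abs_mul, abs_pow, abs_of_nonneg h0]
  exact mul_le_mul_of_nonneg_left (hb t) (pow_nonneg h0 t)

end Aux
set_option maxHeartbeats 1000000
section Key

variable {S A : Type*} [Fintype S] [Fintype A] [DecidableEq S]

lemma sum_swap3 {X1 X2 X3 : Type*} [Fintype X1] [Fintype X2] [Fintype X3]
    (q : X1 → X2 → X3 → ℝ) :
    ∑ a : X1, ∑ b : X2, ∑ c : X3, q a b c = ∑ c : X3, ∑ a : X1, ∑ b : X2, q a b c := by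
  calc ∑ a : X1, ∑ b : X2, ∑ c : X3, q a b c
      = ∑ a : X1, ∑ c : X3, ∑ b : X2, q a b c :=
        Finset.sum_congr rfl fun a _ => Finset.sum_comm
    _ = ∑ c : X3, ∑ a : X1, ∑ b : X2, q a b c := Finset.sum_comm

lemma sum_swap4 {X1 X2 X3 X4 : Type*} [Fintype X1] [Fintype X2] [Fintype X3] [Fintype X4]
    (q : X1 → X2 → X3 → X4 → ℝ) :
    ∑ a : X1, ∑ b : X2, ∑ c : X3, ∑ d : X4, q a b c d
      = ∑ d : X4, ∑ a : X1, ∑ b : X2, ∑ c : X3, q a b c d := by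
  calc ∑ a : X1, ∑ b : X2, ∑ c : X3, ∑ d : X4, q a b c d
      = ∑ a : X1, ∑ d : X4, ∑ b : X2, ∑ c : X3, q a b c d :=
        Finset.sum_congr rfl fun a _ => sum_swap3 _
    _ = ∑ d : X4, ∑ a : X1, ∑ b : X2, ∑ c : X3, q a b c d := Finset.sum_comm

lemma key {γ : ℝ} (h0 : 0 ≤ γ) (h1 : γ < 1) (r P : S → A → S → ℝ) (π : S → A → ℝ)
    (ρ₀ : S → ℝ) (hπ : IsStochPol π) (hP : IsStochKer P) (hρ : IsProb ρ₀) (f : S → ℝ) :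
    ∑ s : S, visitS γ P π ρ₀ s *
        (∑ a : A, ∑ s' : S, π s a * P s a s' * (r s a s' + γ * f s' - f s))
      = (1 - γ) * (ret γ r P π ρ₀ - ∑ s : S, ρ₀ s * f s) := by
  set D := stateDist P π ρ₀ with hD
  set g : S → ℝ := fun s => ∑ a : A, ∑ s' : S, π s a * P s a s' * (r s a s' + γ * f s' - f s)
    with hg
  set F : ℕ → ℝ := fun t => ∑ s : S, D t s * f s with hF
  set R : ℕ → ℝ := fun t =>
    ∑ s : S, ∑ a : A, ∑ s' : S, D t s * π s a * P s a s' * r s a s' with hR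
  set E : ℕ → ℝ := fun t => ∑ s : S, D t s * g s with hE
  have hDp : ∀ t, IsProb (D t) := fun t => stateDist_prob hπ hP hρ t
  -- bounds
  have hFb : ∀ t, |F t| ≤ ∑ s : S, |f s| := fun t => weighted_abs_le (hDp t) f
  have hEb : ∀ t, |E t| ≤ ∑ s : S, |g s| := fun t => weighted_abs_le (hDp t) g
  have hRrw : ∀ t, R t = ∑ s : S, D t s * (∑ a : A, ∑ s' : S, π s a * P s a s' * r s a s') := by
    intro t
    refine Finset.sum_congr rfl fun s _ => ?_
    rw [Finset.mul_sum]
    refine Finset.sum_congr rfl fun a _ => ?_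
    rw [Finset.mul_sum]
    exact Finset.sum_congr rfl fun s' _ => by ring
  have hRb : ∀ t, |R t| ≤ ∑ s : S, |∑ a : A, ∑ s' : S, π s a * P s a s' * r s a s'| := by
    intro t; rw [hRrw t]; exact weighted_abs_le (hDp t) _
  -- summability
  have hsF : Summable (fun t => γ ^ t * F t) := summable_geo_mul h0 h1 hFb
  have hsE : Summable (fun t => γ ^ t * E t) := summable_geo_mul h0 h1 hEb
  have hsR : Summable (fun t => γ ^ t * R t) := summable_geo_mul h0 h1 hRb
  have hsFs : Summable (fun t => γ ^ (t + 1) * F (t + 1)) :=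
    (summable_nat_add_iff 1).mpr hsF
  -- Step A : LHS = (1-γ) * ∑' t, γ^t * E t
  have hA : ∑ s : S, visitS γ P π ρ₀ s * g s = (1 - γ) * ∑' t : ℕ, γ ^ t * E t := by
    have hper : ∀ s : S, Summable (fun t => γ ^ t * D t s * g s) := by
      intro s
      have : ∀ t, |D t s * g s| ≤ |g s| := by
        intro t
        rw [abs_mul]
        exact mul_le_of_le_one_left (abs_nonneg _)
          (by rw [abs_of_nonneg ((hDp t).1 s)]; exact prob_le_one (hDp t) s)
      have := summable_geo_mul h0 h1 this
      simpa [mul_assoc] using this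
    calc ∑ s : S, visitS γ P π ρ₀ s * g s
        = ∑ s : S, (1 - γ) * ∑' t : ℕ, γ ^ t * D t s * g s := by
          refine Finset.sum_congr rfl fun s _ => ?_
          unfold visitS
          rw [mul_assoc, ← tsum_mul_right]
      _ = (1 - γ) * ∑ s : S, ∑' t : ℕ, γ ^ t * D t s * g s := by rw [Finset.mul_sum]
      _ = (1 - γ) * ∑' t : ℕ, ∑ s : S, γ ^ t * D t s * g s := by
          rw [Summable.tsum_finsetSum fun s _ => hper s]
      _ = (1 - γ) * ∑' t : ℕ, γ ^ t * E t := by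
          congr 1
          refine tsum_congr fun t => ?_
          rw [hE, Finset.mul_sum]
          exact Finset.sum_congr rfl fun s _ => by ring
  -- Step B : E t = R t + γ * F (t+1) - F t
  have hEt : ∀ t, E t = R t + γ * F (t + 1) - F t := by
    intro t
    have hexp : E t = ∑ s : S, ∑ a : A, ∑ s' : S,
        D t s * π s a * P s a s' * (r s a s' + γ * f s' - f s) := by
      refine Finset.sum_congr rfl fun s _ => ?_
      rw [hg, Finset.mul_sum]
      refine Finset.sum_congr rfl fun a _ => ?_
      rw [Finset.mul_sum]
      exact Finset.sum_congr rfl fun s' _ => by ring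
    have hsplit : E t = R t
        + γ * (∑ s' : S, (∑ s : S, ∑ a : A, D t s * π s a * P s a s') * f s')
        - ∑ s : S, D t s * f s := by
      rw [hexp]
      have : ∀ s a s', D t s * π s a * P s a s' * (r s a s' + γ * f s' - f s)
          = D t s * π s a * P s a s' * r s a s'
            + γ * (D t s * π s a * P s a s' * f s')
            - D t s * π s a * P s a s' * f s := fun s a s' => by ring
      simp only [this, Finset.sum_add_distrib, Finset.sum_sub_distrib, ← Finset.mul_sum]
      congr 1
      · congr 1
        congr 1
        rw [sum_swap3 (fun s a s' => D t s * π s a * P s a s' * f s')]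
        refine Finset.sum_congr rfl fun s' _ => ?_
        rw [Finset.sum_mul]
        refine Finset.sum_congr rfl fun s _ => ?_
        rw [Finset.sum_mul]
      · refine Finset.sum_congr rfl fun s _ => ?_
        calc ∑ a : A, ∑ s' : S, D t s * π s a * P s a s' * f s
            = ∑ a : A, D t s * π s a * f s * ∑ s' : S, P s a s' := by
              refine Finset.sum_congr rfl fun a _ => ?_
              rw [Finset.mul_sum]
              exact Finset.sum_congr rfl fun s' _ => by ring
          _ = ∑ a : A, D t s * π s a * f s := by
              refine Finset.sum_congr rfl fun a _ => by rw [(hP s a).2, mul_one]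
          _ = D t s * f s * ∑ a : A, π s a := by
              rw [Finset.mul_sum]; exact Finset.sum_congr rfl fun a _ => by ring
          _ = D t s * f s := by rw [(hπ s).2, mul_one]
    have hstep : ∀ s' : S, (∑ s : S, ∑ a : A, D t s * π s a * P s a s') = D (t + 1) s' := by
      intro s'
      show _ = stepDist P π (D t) s'
      unfold stepDist
      exact Finset.sum_congr rfl fun s _ => Finset.sum_congr rfl fun a _ => rfl
    have h2 : ∑ s' : S, (∑ s : S, ∑ a : A, D t s * π s a * P s a s') * f s'
        = ∑ s' : S, D (t + 1) s' * f s' :=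
      Finset.sum_congr rfl fun s' _ => by rw [hstep s']
    rw [hsplit, h2]
  -- Step C : ∑' γ^t E t = ret - F 0
  have hC : ∑' t : ℕ, γ ^ t * E t = ret γ r P π ρ₀ - F 0 := by
    have hret : ret γ r P π ρ₀ = ∑' t : ℕ, γ ^ t * R t := rfl
    have hshift : ∑' t : ℕ, γ ^ (t + 1) * F (t + 1) = (∑' t : ℕ, γ ^ t * F t) - F 0 := by
      have := Summable.tsum_eq_zero_add hsF
      simp only [pow_zero, one_mul] at this
      linarith [this]
    calc ∑' t : ℕ, γ ^ t * E t
        = ∑' t : ℕ, (γ ^ t * R t + (γ ^ (t + 1) * F (t + 1) - γ ^ t * F t)) := by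
          refine tsum_congr fun t => ?_
          rw [hEt t]; ring
      _ = (∑' t : ℕ, γ ^ t * R t)
          + ((∑' t : ℕ, γ ^ (t + 1) * F (t + 1)) - ∑' t : ℕ, γ ^ t * F t) := by
          rw [Summable.tsum_add hsR (hsFs.sub hsF), Summable.tsum_sub hsFs hsF]
      _ = ret γ r P π ρ₀ - F 0 := by rw [hshift, hret]; ring
  have hF0 : F 0 = ∑ s : S, ρ₀ s * f s := by simp only [hF, hD]; rfl
  show ∑ s : S, visitS γ P π ρ₀ s * g s = _
  rw [hA, hC, hF0]

end Key
section Lin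

variable {S A : Type*} [Fintype S] [Fintype A] [DecidableEq S]

lemma dirac_prob (s0 : S) : IsProb (fun x : S => if x = s0 then 1 else (0:ℝ)) := by
  constructor
  · intro x; simp only []; split <;> norm_num
  · simp

lemma stateDist_linear (P : S → A → S → ℝ) (π : S → A → ℝ) (ρ : S → ℝ) (t : ℕ) (s : S) :
    stateDist P π ρ t s
      = ∑ s0 : S, ρ s0 * stateDist P π (fun x => if x = s0 then 1 else 0) t s := by
  induction t generalizing s with
  | zero =>
    show ρ s = ∑ s0 : S, ρ s0 * (if s = s0 then 1 else 0)
    simp [Finset.sum_ite_eq]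
  | succ n ih =>
    show stepDist P π (stateDist P π ρ n) s
      = ∑ s0 : S, ρ s0 * stepDist P π (stateDist P π (fun x => if x = s0 then 1 else 0) n) s
    unfold stepDist
    calc ∑ s' : S, ∑ a : A, stateDist P π ρ n s' * π s' a * P s' a s
        = ∑ s' : S, ∑ a : A, ∑ s0 : S,
            ρ s0 * stateDist P π (fun x => if x = s0 then 1 else 0) n s' * π s' a * P s' a s := by
          refine Finset.sum_congr rfl fun s' _ => Finset.sum_congr rfl fun a _ => ?_
          rw [ih s', Finset.sum_mul, Finset.sum_mul]
      _ = ∑ s0 : S, ∑ s' : S, ∑ a : A,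
            ρ s0 * stateDist P π (fun x => if x = s0 then 1 else 0) n s' * π s' a * P s' a s :=
          sum_swap3 _
      _ = ∑ s0 : S, ρ s0 * ∑ s' : S, ∑ a : A,
            stateDist P π (fun x => if x = s0 then 1 else 0) n s' * π s' a * P s' a s := by
          refine Finset.sum_congr rfl fun s0 _ => ?_
          rw [Finset.mul_sum]
          refine Finset.sum_congr rfl fun s' _ => ?_
          rw [Finset.mul_sum]
          exact Finset.sum_congr rfl fun a _ => by ring

lemma expRet_eq_ret {γ : ℝ} (h0 : 0 ≤ γ) (h1 : γ < 1) (r P : S → A → S → ℝ)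
    (π : S → A → ℝ) (ρ₀ : S → ℝ) (hπ : IsStochPol π) (hP : IsStochKer P) (hρ : IsProb ρ₀) :
    expRet γ r P π ρ₀ = ret γ r P π ρ₀ := by
  set Rd : S → ℕ → ℝ := fun s0 t =>
    ∑ s : S, ∑ a : A, ∑ s' : S,
      stateDist P π (fun x => if x = s0 then 1 else 0) t s * π s a * P s a s' * r s a s'
    with hRd
  have hRdrw : ∀ s0 t, Rd s0 t = ∑ s : S,
      stateDist P π (fun x => if x = s0 then 1 else 0) t s *
        (∑ a : A, ∑ s' : S, π s a * P s a s' * r s a s') := by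
    intro s0 t
    refine Finset.sum_congr rfl fun s _ => ?_
    rw [Finset.mul_sum]
    refine Finset.sum_congr rfl fun a _ => ?_
    rw [Finset.mul_sum]
    exact Finset.sum_congr rfl fun s' _ => by ring
  have hRdb : ∀ s0 t, |Rd s0 t| ≤ ∑ s : S, |∑ a : A, ∑ s' : S, π s a * P s a s' * r s a s'| := by
    intro s0 t
    rw [hRdrw]
    exact weighted_abs_le (stateDist_prob hπ hP (dirac_prob s0) t) _
  have hsum : ∀ s0 : S, Summable (fun t => γ ^ t * (ρ₀ s0 * Rd s0 t)) := by
    intro s0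
    refine summable_geo_mul h0 h1 (B := ∑ s : S, |∑ a : A, ∑ s' : S, π s a * P s a s' * r s a s'|)
      fun t => ?_
    rw [abs_mul, abs_of_nonneg (hρ.1 s0)]
    calc ρ₀ s0 * |Rd s0 t| ≤ 1 * |Rd s0 t| :=
          mul_le_mul_of_nonneg_right (prob_le_one hρ s0) (abs_nonneg _)
      _ = |Rd s0 t| := one_mul _
      _ ≤ _ := hRdb s0 t
  have hval : ∀ s0 : S, valueFn γ r P π s0 = ∑' t : ℕ, γ ^ t * Rd s0 t := fun s0 => rfl
  calc expRet γ r P π ρ₀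
      = ∑ s0 : S, ρ₀ s0 * ∑' t : ℕ, γ ^ t * Rd s0 t := by
        refine Finset.sum_congr rfl fun s0 _ => by rw [hval]
    _ = ∑ s0 : S, ∑' t : ℕ, γ ^ t * (ρ₀ s0 * Rd s0 t) := by
        refine Finset.sum_congr rfl fun s0 _ => ?_
        rw [← tsum_mul_left]
        exact tsum_congr fun t => by ring
    _ = ∑' t : ℕ, ∑ s0 : S, γ ^ t * (ρ₀ s0 * Rd s0 t) := (Summable.tsum_finsetSum fun s0 _ => hsum s0).symm
    _ = ret γ r P π ρ₀ := by
        refine tsum_congr fun t => ?_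
        show _ = γ ^ t * ∑ s : S, ∑ a : A, ∑ s' : S,
          stateDist P π ρ₀ t s * π s a * P s a s' * r s a s'
        rw [← Finset.mul_sum]
        congr 1
        calc ∑ s0 : S, ρ₀ s0 * Rd s0 t
            = ∑ s0 : S, ∑ s : S, ∑ a : A, ∑ s' : S,
                ρ₀ s0 * (stateDist P π (fun x => if x = s0 then 1 else 0) t s
                  * π s a * P s a s' * r s a s') := by
              refine Finset.sum_congr rfl fun s0 _ => ?_
              rw [hRd]
              simp only [Finset.mul_sum]
          _ = ∑ s : S, ∑ a : A, ∑ s' : S, ∑ s0 : S,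
                ρ₀ s0 * (stateDist P π (fun x => if x = s0 then 1 else 0) t s
                  * π s a * P s a s' * r s a s') := by
              rw [← sum_swap4 (fun s a s' s0 => ρ₀ s0 *
                (stateDist P π (fun x => if x = s0 then 1 else 0) t s
                  * π s a * P s a s' * r s a s'))]
          _ = ∑ s : S, ∑ a : A, ∑ s' : S,
                stateDist P π ρ₀ t s * π s a * P s a s' * r s a s' := by
              refine Finset.sum_congr rfl fun s _ => Finset.sum_congr rfl fun a _ =>
                Finset.sum_congr rfl fun s' _ => ?_
              rw [stateDist_linear P π ρ₀ t s, Finset.sum_mul, Finset.sum_mul, Finset.sum_mul]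
              exact Finset.sum_congr rfl fun s0 _ => by ring

end Lin
theorem stmt5 {S A : Type*} [Fintype S] [Fintype A] [DecidableEq S] [Nonempty S]
    (γ : ℝ) (hγ0 : 0 ≤ γ) (hγ1 : γ < 1)
    (r Ps Pt : S → A → S → ℝ) (π : S → A → ℝ) (ρ₀ : S → ℝ)
    (hπ : IsStochPol π) (hPs : IsStochKer Ps) (hPt : IsStochKer Pt) (hρ : IsProb ρ₀)
    (f : S → ℝ) :
    (1 - γ) * (expRet γ r Pt π ρ₀ - expRet γ r Ps π ρ₀) ≥
      (∑ s : S, ∑ a : A, visitS γ Ps π ρ₀ s * π s a *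
          ((∑ s' : S, Pt s a s' * (r s a s' + γ * f s' - f s)) -
            (∑ s' : S, Ps s a s' * (r s a s' + γ * f s' - f s)))) -
        2 * (⨆ s : S, |∑ a : A, ∑ s' : S, π s a * Pt s a s' * (r s a s' + γ * f s' - f s)|) *
          tvDist (visitS γ Ps π ρ₀) (visitS γ Pt π ρ₀) := by
  set ds := visitS γ Ps π ρ₀ with hds
  set dt := visitS γ Pt π ρ₀ with hdt
  set gt : S → ℝ := fun s => ∑ a : A, ∑ s' : S, π s a * Pt s a s' * (r s a s' + γ * f s' - f s)
    with hgt
  set gs : S → ℝ := fun s => ∑ a : A, ∑ s' : S, π s a * Ps s a s' * (r s a s' + γ * f s' - f s)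
    with hgs
  have hks := key hγ0 hγ1 r Ps π ρ₀ hπ hPs hρ f
  have hkt := key hγ0 hγ1 r Pt π ρ₀ hπ hPt hρ f
  have hes := expRet_eq_ret hγ0 hγ1 r Ps π ρ₀ hπ hPs hρ
  have het := expRet_eq_ret hγ0 hγ1 r Pt π ρ₀ hπ hPt hρ
  have hJ : (1 - γ) * (expRet γ r Pt π ρ₀ - expRet γ r Ps π ρ₀)
      = (∑ s : S, dt s * gt s) - ∑ s : S, ds s * gs s := by
    rw [hes, het, ← hgt, ← hgs, ← hds, ← hdt] at *
    rw [hks, hkt]; ring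
  have hL : (∑ s : S, ∑ a : A, ds s * π s a *
        ((∑ s' : S, Pt s a s' * (r s a s' + γ * f s' - f s)) -
          (∑ s' : S, Ps s a s' * (r s a s' + γ * f s' - f s))))
      = (∑ s : S, ds s * gt s) - ∑ s : S, ds s * gs s := by
    rw [← Finset.sum_sub_distrib]
    refine Finset.sum_congr rfl fun s _ => ?_
    have e1 : ds s * gt s = ∑ a : A, ds s * π s a * ∑ s' : S,
        Pt s a s' * (r s a s' + γ * f s' - f s) := by
      rw [hgt]
      simp only [Finset.mul_sum]
      refine Finset.sum_congr rfl fun a _ => Finset.sum_congr rfl fun s' _ => by ring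
    have e2 : ds s * gs s = ∑ a : A, ds s * π s a * ∑ s' : S,
        Ps s a s' * (r s a s' + γ * f s' - f s) := by
      rw [hgs]
      simp only [Finset.mul_sum]
      refine Finset.sum_congr rfl fun a _ => Finset.sum_congr rfl fun s' _ => by ring
    rw [e1, e2, ← Finset.sum_sub_distrib]
    exact Finset.sum_congr rfl fun a _ => by ring
  have hsup : (⨆ s : S, |∑ a : A, ∑ s' : S, π s a * Pt s a s' * (r s a s' + γ * f s' - f s)|)
      = ⨆ s : S, |gt s| := rfl
  set ε := ⨆ s : S, |gt s| with hε
  have hεle : ∀ s : S, |gt s| ≤ ε := fun s => hε ▸ le_ciSup (f := fun s : S => |gt s|) (Set.Finite.bddAbove (Set.finite_range _)) s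
  have hbound : ∑ s : S, (dt s - ds s) * gt s ≥ -(ε * ∑ s : S, |ds s - dt s|) := by
    have hpt : ∀ s : S, (dt s - ds s) * gt s ≥ -(ε * |ds s - dt s|) := by
      intro s
      have h1 : |(dt s - ds s) * gt s| ≤ ε * |ds s - dt s| := by
        rw [abs_mul, abs_sub_comm, mul_comm]
        exact mul_le_mul_of_nonneg_right (hεle s) (abs_nonneg _)
      have h2 := neg_abs_le ((dt s - ds s) * gt s)
      linarith
    calc ∑ s : S, (dt s - ds s) * gt s ≥ ∑ s : S, -(ε * |ds s - dt s|) :=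
          Finset.sum_le_sum fun s _ => hpt s
      _ = -(ε * ∑ s : S, |ds s - dt s|) := by
          rw [Finset.sum_neg_distrib, ← Finset.mul_sum]
  have hsplit : ∑ s : S, (dt s - ds s) * gt s
      = (∑ s : S, dt s * gt s) - ∑ s : S, ds s * gt s := by
    rw [← Finset.sum_sub_distrib]
    exact Finset.sum_congr rfl fun s _ => by ring
  have htv : 2 * ε * tvDist ds dt = ε * ∑ s : S, |ds s - dt s| := by
    unfold tvDist; ring
  rw [hsup, hJ, hL, htv]
  rw [hsplit] at hbound
  linarith
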